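/- arXiv:1401.2168 — 3 statements merged into one kernel-verified Lean document; each statement's English description precedes it below -/
import Mathlib

section
/- Let the observation space Y be partitioned into two disjoint Borel subsets Y₁ and Y₂ with Y₁ open in Y and Y₂ countable. Suppose: (a) the stochastic kernels P on X given X×A and Q on Y given A×X are weakly continuous; (b) for each y ∈ Y₂ the function (a,x) ↦ Q({y}|a,x) is continuous on A×X; and (c) there exists a stochastic kernel H on X given P(X)×A×Y satisfying the disintegration identity (3.4) whose restriction to P(X)×A×Y₁ is weakly continuous. Then the stochastic kernel q on P(X) given P(X)×A, defined by q(D|z,a) = ∫_Y 1{H(z,a,y) ∈ D} R′(dy|z,a), is weakly continuous. -/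
/-!
By the portmanteau theorem it suffices to show `q(z,a)(G) ≤ liminf q(zₙ,aₙ)(G)` for open `G`,
where `q(z,a)` is the image of the observation law `R'(z,a)` under `y ↦ H(z,a,y)`.
Split the preimage of `G` along `Y = Y₁ ∪ Y₂`. On the open set `Y₁` the maps
`y ↦ H(zₙ,aₙ,y)` converge continuously to `y ↦ H(z,a,y)`, so the preimages of `G` eventually
contain a fixed open neighbourhood of each point, and the weak convergence
`R'(zₙ,aₙ) → R'(z,a)` bounds their mass from below. On the countable set `Y₂` the mass is a sum of
atoms: each `R'(zₙ,aₙ){y}` converges by (b), and at an atom of positive mass the disintegration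
identity reads `R'{y} • H(z,a,y) = (P ∘ z).withDensity Q({y}|a,·)`, which makes
`H(zₙ,aₙ,y) → H(z,a,y)`; Fatou's lemma for sums concludes. All the convergences needed reduce to
the weak continuity of `(z,a) ↦ ∫∫ θ(a,x') P(dx'|x,a) z(dx)` for bounded continuous `θ`, which
follows from the continuity of products of probability measures applied to `δₐ ⊗ z`.
-/

open MeasureTheory Filter Topology
open scoped ENNReal NNReal

/-- The joint kernel `R(B×C|z,a) = ∫_X ∫_B Q(C|a,x') P(dx'|x,a) z(dx)` of formula (3.3). -/
noncomputable def Rfun {X Y A : Type*} [MeasurableSpace X] [MeasurableSpace Y]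
    (P : X × A → ProbabilityMeasure X) (Q : A × X → ProbabilityMeasure Y)
    (z : ProbabilityMeasure X) (a : A) (B : Set X) (C : Set Y) : ℝ≥0∞ :=
  ∫⁻ x, (∫⁻ x' in B, ((Q (a, x') : Measure Y) C) ∂((P (x, a) : Measure X))) ∂(z : Measure X)

/-- The marginal observation kernel `R'(dy|z,a)` on `Y` given `P(X)×A`, as a measure. -/
noncomputable def RprimeM {X Y A : Type*} [MeasurableSpace X] [MeasurableSpace Y]
    (P : X × A → ProbabilityMeasure X) (Q : A × X → ProbabilityMeasure Y)
    (z : ProbabilityMeasure X) (a : A) : Measure Y :=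
  ((z : Measure X).bind fun x => (P (x, a) : Measure X)).bind fun x' => (Q (a, x') : Measure Y)

/-- The disintegration identity (3.4). -/
def Disint {X Y A : Type*} [MeasurableSpace X] [MeasurableSpace Y]
    (P : X × A → ProbabilityMeasure X) (Q : A × X → ProbabilityMeasure Y)
    (H : ProbabilityMeasure X × A × Y → ProbabilityMeasure X) : Prop :=
  ∀ (z : ProbabilityMeasure X) (a : A) (B : Set X) (C : Set Y),
    MeasurableSet B → MeasurableSet C →
      Rfun P Q z a B C = ∫⁻ y in C, ((H (z, a, y) : Measure X) B) ∂(RprimeM P Q z a)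

/-- The Borel σ-algebra of the weak topology on `P(X)`. -/
noncomputable instance probabilityMeasureMeasurableSpace {X : Type*}
    [MeasurableSpace X] [TopologicalSpace X] [OpensMeasurableSpace X] :
    MeasurableSpace (ProbabilityMeasure X) := borel _

/-- The transition kernel `q(D|z,a) = ∫_Y 1{H(z,a,y) ∈ D} R'(dy|z,a)` of the COMDP. -/
noncomputable def qker {X Y A : Type*}
    [MeasurableSpace X] [TopologicalSpace X] [OpensMeasurableSpace X] [MeasurableSpace Y]
    (P : X × A → ProbabilityMeasure X) (Q : A × X → ProbabilityMeasure Y)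
    (H : ProbabilityMeasure X × A × Y → ProbabilityMeasure X)
    (z : ProbabilityMeasure X) (a : A) : Measure (ProbabilityMeasure X) :=
  (RprimeM P Q z a).map fun y => H (z, a, y)

open ProbabilityTheory TopologicalSpace
open scoped BoundedContinuousFunction

instance probabilityMeasureBorelSpace {X : Type*} [MeasurableSpace X] [TopologicalSpace X]
    [OpensMeasurableSpace X] : BorelSpace (ProbabilityMeasure X) :=
  ⟨rfl⟩

theorem ENNReal.le_liminf_add (u v : ℕ → ℝ≥0∞) :
    liminf u atTop + liminf v atTop ≤ liminf (u + v) atTop := by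
  have hmono (w : ℕ → ℝ≥0∞) : Monotone fun N => ⨅ n ≥ N, w n :=
    fun _ _ h => le_iInf₂ fun n hn => iInf₂_le n (h.trans hn)
  simp only [liminf_eq_iSup_iInf_of_nat]
  rw [ENNReal.iSup_add_iSup_of_monotone (hmono u) (hmono v)]
  exact iSup_mono fun N => le_iInf₂ fun n hn => add_le_add (iInf₂_le n hn) (iInf₂_le n hn)

theorem ENNReal.tsum_liminf_le_liminf_tsum {ι : Type*} (f : ℕ → ι → ℝ≥0∞) :
    ∑' i, liminf (fun n => f n i) atTop ≤ liminf (fun n => ∑' i, f n i) atTop := by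
  let : MeasurableSpace ι := ⊤
  simpa only [lintegral_count] using
    lintegral_liminf_le (μ := Measure.count) fun n => measurable_from_top (f := f n)

section LowerBounds

variable {S : Type*} [MeasurableSpace S]

theorem measure_inter_eq_tsum_of_countable [MeasurableSingletonClass S] (μ : Measure S)
    (s : Set S) {C : Set S} (hC : C.Countable) :
    μ (s ∩ C) = ∑' y : C, μ (s ∩ {(y : S)}) := by
  have h := tsum_measure_preimage_singleton (μ := μ.restrict s) hC (f := id)
    fun y _ => measurableSet_singleton y
  simp only [Set.preimage_id, Measure.restrict_apply (measurableSet_singleton _),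
    Measure.restrict_apply hC.measurableSet] at h
  simp only [Set.inter_comm s, h]

theorem measure_inter_le_liminf_of_countable [MeasurableSingletonClass S] {μ : Measure S}
    {μs : ℕ → Measure S} {C : Set S} (hC : C.Countable) {s : Set S} {ss : ℕ → Set S}
    (h : ∀ y ∈ C, y ∈ s → μ {y} ≠ 0 →
      Tendsto (fun n => μs n {y}) atTop (𝓝 (μ {y})) ∧ ∀ᶠ n in atTop, y ∈ ss n) :
    μ (s ∩ C) ≤ liminf (fun n => μs n (ss n ∩ C)) atTop := by
  simp only [measure_inter_eq_tsum_of_countable _ _ hC]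
  refine (ENNReal.tsum_le_tsum fun y => ?_).trans (ENNReal.tsum_liminf_le_liminf_tsum _)
  by_cases hys : (y : S) ∈ s
  · rcases eq_or_ne (μ {(y : S)}) 0 with h0 | h0
    · exact ((measure_mono Set.inter_subset_right).trans h0.le).trans bot_le
    · obtain ⟨hlim, hmem⟩ := h y y.2 hys h0
      rw [Set.inter_eq_right.mpr (Set.singleton_subset_iff.mpr hys), ← hlim.liminf_eq]
      refine liminf_le_liminf (hmem.mono fun n hn => ?_)
      rw [Set.inter_eq_right.mpr (Set.singleton_subset_iff.mpr hn)]
  · simp [Set.inter_singleton_eq_empty.mpr hys]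

variable [TopologicalSpace S]

theorem measure_le_liminf_measure_of_eventually_mem {μ : Measure S} {μs : ℕ → Measure S}
    (h_opens : ∀ G, IsOpen G → μ G ≤ liminf (fun n => μs n G) atTop)
    {s : Set S} {ss : ℕ → Set S} (hs : ∀ y ∈ s, ∀ᶠ p in atTop ×ˢ 𝓝 y, p.2 ∈ ss p.1) :
    μ s ≤ liminf (fun n => μs n (ss n)) atTop := by
  -- `W k` is an open set contained in every `ss n` with `n ≥ k`, and the `W k` exhaust `s`.
  set W : ℕ → Set S := fun k => interior (⋂ n ≥ k, ss n)
  have hW_mono : Monotone W := fun k l hkl =>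
    interior_mono (Set.biInter_mono (fun n hn => le_trans hkl hn) fun _ _ => le_rfl)
  have hs_sub : s ⊆ ⋃ k, W k := by
    intro y hy
    obtain ⟨V, hV, N, hN⟩ : ∃ V ∈ 𝓝 y, ∃ N, ∀ n ≥ N, V ⊆ ss n := by
      obtain ⟨t, ht, V, hV, htV⟩ := mem_prod_iff.mp (hs y hy)
      obtain ⟨N, hN⟩ := mem_atTop_sets.mp ht
      exact ⟨V, hV, N, fun n hn y' hy' => htV (Set.mk_mem_prod (hN n hn) hy')⟩
    exact Set.mem_iUnion.mpr ⟨N, mem_interior_iff_mem_nhds.mpr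
      (Filter.mem_of_superset hV (Set.subset_iInter₂ hN))⟩
  calc μ s ≤ μ (⋃ k, W k) := measure_mono hs_sub
    _ = ⨆ k, μ (W k) := hW_mono.measure_iUnion
    _ ≤ liminf (fun n => μs n (ss n)) atTop := iSup_le fun k =>
      (h_opens _ isOpen_interior).trans <| liminf_le_liminf <|
        eventually_atTop.mpr ⟨k, fun n hn => measure_mono <|
          interior_subset.trans (Set.biInter_subset_of_mem hn)⟩

theorem map_le_liminf_map [OpensMeasurableSpace S] [MeasurableSingletonClass S]
    {Z : Type*} [TopologicalSpace Z] [MeasurableSpace Z] [OpensMeasurableSpace Z]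
    {μ : Measure S} {μs : ℕ → Measure S}
    (h_opens : ∀ G, IsOpen G → μ G ≤ liminf (fun n => μs n G) atTop)
    {U : Set S} (hU : IsOpen U) (hUc : Uᶜ.Countable)
    {F : S → Z} {Fs : ℕ → S → Z} (hF : Measurable F) (hFs : ∀ n, Measurable (Fs n))
    (hcont : ∀ y ∈ U, Tendsto (fun p : ℕ × S => Fs p.1 p.2) (atTop ×ˢ 𝓝 y) (𝓝 (F y)))
    (hatom : ∀ y ∈ Uᶜ, μ {y} ≠ 0 →
      Tendsto (fun n => μs n {y}) atTop (𝓝 (μ {y})) ∧ Tendsto (fun n => Fs n y) atTop (𝓝 (F y)))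
    {G : Set Z} (hG : IsOpen G) :
    μ.map F G ≤ liminf (fun n => (μs n).map (Fs n) G) atTop := by
  have hsplit (ν : Measure S) {F' : S → Z} (hF' : Measurable F') :
      ν.map F' G = ν (F' ⁻¹' G ∩ U) + ν (F' ⁻¹' G ∩ Uᶜ) := by
    rw [Measure.map_apply hF' hG.measurableSet, ← measure_inter_add_sdiff _ hU.measurableSet,
      Set.sdiff_eq]
  simp only [hsplit _ hF, hsplit _ (hFs _)]
  refine (add_le_add ?_ ?_).trans (ENNReal.le_liminf_add _ _)
  · refine measure_le_liminf_measure_of_eventually_mem h_opens fun y hy => ?_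
    exact ((hcont y hy.2).eventually (hG.mem_nhds hy.1)).and
      (tendsto_snd.eventually (hU.mem_nhds hy.2))
  · exact measure_inter_le_liminf_of_countable hUc fun y hy hyG h0 =>
      ⟨(hatom y hy h0).1, (hatom y hy h0).2.eventually (hG.mem_nhds hyG)⟩

end LowerBounds

section Parametric

variable {T S : Type*}
  [TopologicalSpace T] [MeasurableSpace T] [OpensMeasurableSpace T]
  [TopologicalSpace S] [MeasurableSpace S] [OpensMeasurableSpace S]

theorem integral_diracProba_prod [SecondCountableTopology S] (φ : (T × S) →ᵇ ℝ) (t : T)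
    (μ : ProbabilityMeasure S) :
    ∫ p, φ p ∂((diracProba t).prod μ : Measure (T × S)) = ∫ s, φ (t, s) ∂(μ : Measure S) := by
  rw [ProbabilityMeasure.toMeasure_prod, diracProba, ProbabilityMeasure.coe_mk, Measure.dirac_prod,
    integral_map measurable_prodMk_left.aemeasurable φ.continuous.aestronglyMeasurable]

variable [SecondCountableTopology T] [PseudoMetrizableSpace T]
  [SecondCountableTopology S] [PseudoMetrizableSpace S]

theorem tendsto_integral_of_tendsto_of_tendsto {ι : Type*} {L : Filter ι}
    {ts : ι → T} {t : T} (ht : Tendsto ts L (𝓝 t))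
    {μs : ι → ProbabilityMeasure S} {μ : ProbabilityMeasure S} (hμ : Tendsto μs L (𝓝 μ))
    (φ : (T × S) →ᵇ ℝ) :
    Tendsto (fun i => ∫ s, φ (ts i, s) ∂(μs i : Measure S)) L
      (𝓝 (∫ s, φ (t, s) ∂(μ : Measure S))) := by
  have h := ((ProbabilityMeasure.continuous_integral_boundedContinuousFunction φ).tendsto _).comp
    ((ProbabilityMeasure.continuous_prod.tendsto _).comp
      (((continuous_diracProba.tendsto t).comp ht).prodMk_nhds hμ))
  simpa only [Function.comp_def, integral_diracProba_prod] using h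

noncomputable def BoundedContinuousFunction.parametricIntegral (φ : (T × S) →ᵇ ℝ)
    (κ : C(T, ProbabilityMeasure S)) : T →ᵇ ℝ :=
  .ofNormedAddCommGroup (fun t => ∫ s, φ (t, s) ∂(κ t : Measure S))
    (continuous_iff_continuousAt.mpr fun t =>
      tendsto_integral_of_tendsto_of_tendsto tendsto_id (κ.continuous.tendsto t) φ)
    ‖φ‖ fun t => by
      simpa using norm_integral_le_of_norm_le_const (μ := (κ t : Measure S))
        (ae_of_all _ fun s => φ.norm_coe_le_norm (t, s))

end Parametric

noncomputable def BoundedContinuousFunction.ofMeasureReal {T S : Type*} [TopologicalSpace T]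
    [MeasurableSpace S] (Q : T → ProbabilityMeasure S) (s : Set S)
    (hQs : Continuous fun p => (Q p s : ℝ)) : T →ᵇ ℝ :=
  .ofNormedAddCommGroup (fun p => (Q p : Measure S).real s) (by simpa using hQs) 1
    fun p => by simp

section KernelIntegral

variable {α β E : Type*} [MeasurableSpace α] [MeasurableSpace β]
  [NormedAddCommGroup E] [NormedSpace ℝ E]

noncomputable def markovKernel (κ : α → ProbabilityMeasure β)
    (hκ : Measurable fun x => (κ x : Measure β)) : Kernel α β :=
  ⟨fun x => κ x, hκ⟩

instance (κ : α → ProbabilityMeasure β) (hκ : Measurable fun x => (κ x : Measure β)) :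
    IsMarkovKernel (markovKernel κ hκ) :=
  ⟨fun x => (κ x).prop⟩

theorem integral_measureComp {μ : Measure α} {κ : Kernel α β} {f : β → E}
    (hf : Integrable f (κ ∘ₘ μ)) : ∫ y, f y ∂(κ ∘ₘ μ) = ∫ x, ∫ y, f y ∂κ x ∂μ := by
  rw [Measure.comp_eq_comp_const_apply] at hf ⊢
  simpa using Kernel.integral_comp hf

theorem MeasureTheory.Integrable.integral_measureComp {μ : Measure α} {κ : Kernel α β}
    {f : β → E} (hf : Integrable f (κ ∘ₘ μ)) : Integrable (fun x => ∫ y, f y ∂κ x) μ := by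
  rw [Measure.comp_eq_comp_const_apply] at hf
  simpa using hf.integral_comp

end KernelIntegral

section Observation

variable {X Y A : Type*} [MeasurableSpace X] [MeasurableSpace Y] [MeasurableSpace A]
  {P : X × A → ProbabilityMeasure X} {Q : A × X → ProbabilityMeasure Y}

theorem rprimeM_eq_comp (hP : Measurable fun p => (P p : Measure X))
    (hQ : Measurable fun p => (Q p : Measure Y)) (z : ProbabilityMeasure X) (a : A) :
    RprimeM P Q z a = markovKernel (fun x' => Q (a, x')) (hQ.comp measurable_prodMk_left) ∘ₘ
      (markovKernel (fun x => P (x, a)) (hP.comp measurable_prodMk_right) ∘ₘ (z : Measure X)) :=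
  rfl

theorem isProbabilityMeasure_rprimeM (hP : Measurable fun p => (P p : Measure X))
    (hQ : Measurable fun p => (Q p : Measure Y)) (z : ProbabilityMeasure X) (a : A) :
    IsProbabilityMeasure (RprimeM P Q z a) := by
  rw [rprimeM_eq_comp hP hQ]
  infer_instance

noncomputable def rprime (hP : Measurable fun p => (P p : Measure X))
    (hQ : Measurable fun p => (Q p : Measure Y)) (z : ProbabilityMeasure X) (a : A) :
    ProbabilityMeasure Y :=
  ⟨RprimeM P Q z a, isProbabilityMeasure_rprimeM hP hQ z a⟩

theorem integral_rprimeM (hP : Measurable fun p => (P p : Measure X))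
    (hQ : Measurable fun p => (Q p : Measure Y)) (z : ProbabilityMeasure X) (a : A)
    {g : Y → ℝ} (hg : Integrable g (RprimeM P Q z a)) :
    ∫ y, g y ∂(RprimeM P Q z a) =
      ∫ x, ∫ x', ∫ y, g y ∂(Q (a, x') : Measure Y) ∂(P (x, a) : Measure X) ∂(z : Measure X) := by
  rw [rprimeM_eq_comp hP hQ] at hg ⊢
  rw [integral_measureComp hg, integral_measureComp hg.integral_measureComp]
  rfl

theorem rprimeM_singleton_smul_eq_withDensity [MeasurableSingletonClass Y]
    {H : ProbabilityMeasure X × A × Y → ProbabilityMeasure X}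
    (hP : Measurable fun p => (P p : Measure X)) (hQ : Measurable fun p => (Q p : Measure Y))
    (hH : Disint P Q H) (z : ProbabilityMeasure X) (a : A) (y : Y) :
    RprimeM P Q z a {y} • (H (z, a, y) : Measure X) =
      (markovKernel (fun x => P (x, a)) (hP.comp measurable_prodMk_right) ∘ₘ
        (z : Measure X)).withDensity fun x' => (Q (a, x') : Measure Y) {y} := by
  ext B hB
  have hq : Measurable fun x' => (Q (a, x') : Measure Y) {y} :=
    (Measure.measurable_coe (measurableSet_singleton y)).comp (hQ.comp measurable_prodMk_left)
  have hR := hH z a B {y} hB (measurableSet_singleton y)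
  rw [Measure.restrict_singleton, lintegral_smul_measure, lintegral_dirac, smul_eq_mul] at hR
  rw [Measure.smul_apply, smul_eq_mul, ← hR, withDensity_apply _ hB, ← lintegral_indicator hB,
    Measure.lintegral_bind (Kernel.aemeasurable _) (hq.indicator hB).aemeasurable]
  refine lintegral_congr fun x => ?_
  rw [lintegral_indicator hB]
  rfl

theorem rprimeM_real_singleton_mul_integral [MeasurableSingletonClass Y] [TopologicalSpace X]
    [OpensMeasurableSpace X] {H : ProbabilityMeasure X × A × Y → ProbabilityMeasure X}
    (hP : Measurable fun p => (P p : Measure X)) (hQ : Measurable fun p => (Q p : Measure Y))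
    (hH : Disint P Q H) (z : ProbabilityMeasure X) (a : A) (y : Y) (h : X →ᵇ ℝ) :
    (RprimeM P Q z a).real {y} * ∫ x', h x' ∂(H (z, a, y) : Measure X) =
      ∫ x, ∫ x', (Q (a, x') : Measure Y).real {y} * h x' ∂(P (x, a) : Measure X)
        ∂(z : Measure X) := by
  have hq : Measurable fun x' => (Q (a, x') : Measure Y) {y} :=
    (Measure.measurable_coe (measurableSet_singleton y)).comp (hQ.comp measurable_prodMk_left)
  have h_int : Integrable (fun x' => ((Q (a, x') : Measure Y) {y}).toReal • h x')
      (markovKernel (fun x => P (x, a)) (hP.comp measurable_prodMk_right) ∘ₘ (z : Measure X)) := by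
    refine Integrable.of_bound (hq.ennreal_toReal.smul h.continuous.measurable).aestronglyMeasurable
      ‖h‖ (ae_of_all _ fun x' => ?_)
    rw [norm_smul]
    have hq_le : ‖((Q (a, x') : Measure Y) {y}).toReal‖ ≤ 1 := by simp [← measureReal_def]
    exact (mul_le_mul hq_le (h.norm_coe_le_norm x') (norm_nonneg _) zero_le_one).trans_eq
      (one_mul _)
  rw [measureReal_def, ← smul_eq_mul, ← integral_smul_measure,
    rprimeM_singleton_smul_eq_withDensity hP hQ hH, integral_withDensity_eq_integral_toReal_smul hq
      (ae_of_all _ fun _ => measure_lt_top _ _), integral_measureComp h_int]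
  rfl

end Observation

section WeakContinuity

variable {X Y A : Type*}
  [MetricSpace X] [SecondCountableTopology X] [MeasurableSpace X] [OpensMeasurableSpace X]
  [MetricSpace Y] [SecondCountableTopology Y] [MeasurableSpace Y] [OpensMeasurableSpace Y]
  [MetricSpace A] [SecondCountableTopology A] [MeasurableSpace A] [OpensMeasurableSpace A]
  {P : X × A → ProbabilityMeasure X} {Q : A × X → ProbabilityMeasure Y}
  {zs : ℕ → ProbabilityMeasure X} {z : ProbabilityMeasure X} {as : ℕ → A} {a : A}

theorem tendsto_integral_integral (hP : Continuous P) (θ : (A × X) →ᵇ ℝ)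
    (hz : Tendsto zs atTop (𝓝 z)) (ha : Tendsto as atTop (𝓝 a)) :
    Tendsto (fun n => ∫ x, ∫ x', θ (as n, x') ∂(P (x, as n) : Measure X) ∂(zs n : Measure X))
      atTop (𝓝 (∫ x, ∫ x', θ (a, x') ∂(P (x, a) : Measure X) ∂(z : Measure X))) :=
  tendsto_integral_of_tendsto_of_tendsto ha hz
    ((θ.compContinuous ⟨fun q : (A × X) × X => (q.1.1, q.2), by fun_prop⟩).parametricIntegral
      ⟨fun p : A × X => P (p.2, p.1), hP.comp continuous_swap⟩)

theorem tendsto_rprime (hPm : Measurable fun p => (P p : Measure X))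
    (hQm : Measurable fun p => (Q p : Measure Y)) (hP : Continuous P) (hQ : Continuous Q)
    (hz : Tendsto zs atTop (𝓝 z)) (ha : Tendsto as atTop (𝓝 a)) :
    Tendsto (fun n => rprime hPm hQm (zs n) (as n)) atTop (𝓝 (rprime hPm hQm z a)) := by
  rw [ProbabilityMeasure.tendsto_iff_forall_integral_tendsto]
  intro g
  have hg (ζ : ProbabilityMeasure X) (b : A) : Integrable g (RprimeM P Q ζ b) :=
    have := isProbabilityMeasure_rprimeM hPm hQm ζ b
    g.integrable _
  simp only [rprime, ProbabilityMeasure.coe_mk, integral_rprimeM hPm hQm _ _ (hg _ _)]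
  exact tendsto_integral_integral hP
    ((g.compContinuous ⟨Prod.snd, continuous_snd⟩).parametricIntegral ⟨Q, hQ⟩) hz ha

theorem tendsto_rprimeM_real_singleton (hPm : Measurable fun p => (P p : Measure X))
    (hQm : Measurable fun p => (Q p : Measure Y)) (hP : Continuous P) {y : Y}
    (hQy : Continuous fun p : A × X => ((Q p) {y} : ℝ))
    (hz : Tendsto zs atTop (𝓝 z)) (ha : Tendsto as atTop (𝓝 a)) :
    Tendsto (fun n => (RprimeM P Q (zs n) (as n)).real {y}) atTop
      (𝓝 ((RprimeM P Q z a).real {y})) := by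
  have hmass (ζ : ProbabilityMeasure X) (b : A) : (RprimeM P Q ζ b).real {y} =
      ∫ x, ∫ x', (Q (b, x') : Measure Y).real {y} ∂(P (x, b) : Measure X) ∂(ζ : Measure X) := by
    have := isProbabilityMeasure_rprimeM hPm hQm ζ b
    simpa using integral_rprimeM hPm hQm ζ b
      ((integrable_const (1 : ℝ)).indicator (measurableSet_singleton y))
  simp only [hmass]
  exact tendsto_integral_integral hP (.ofMeasureReal Q {y} hQy) hz ha

theorem tendsto_rprimeM_singleton (hPm : Measurable fun p => (P p : Measure X))
    (hQm : Measurable fun p => (Q p : Measure Y)) (hP : Continuous P) {y : Y}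
    (hQy : Continuous fun p : A × X => ((Q p) {y} : ℝ))
    (hz : Tendsto zs atTop (𝓝 z)) (ha : Tendsto as atTop (𝓝 a)) :
    Tendsto (fun n => RprimeM P Q (zs n) (as n) {y}) atTop (𝓝 (RprimeM P Q z a {y})) := by
  have := fun n => isProbabilityMeasure_rprimeM hPm hQm (zs n) (as n)
  have := isProbabilityMeasure_rprimeM hPm hQm z a
  exact (ENNReal.tendsto_toReal_iff (fun n => measure_ne_top _ _) (measure_ne_top _ _)).mp
    (tendsto_rprimeM_real_singleton hPm hQm hP hQy hz ha)

theorem tendsto_H_of_rprimeM_singleton_ne_zero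
    {H : ProbabilityMeasure X × A × Y → ProbabilityMeasure X}
    (hPm : Measurable fun p => (P p : Measure X)) (hQm : Measurable fun p => (Q p : Measure Y))
    (hH : Disint P Q H) (hP : Continuous P) {y : Y}
    (hQy : Continuous fun p : A × X => ((Q p) {y} : ℝ))
    (hz : Tendsto zs atTop (𝓝 z)) (ha : Tendsto as atTop (𝓝 a)) (hy : RprimeM P Q z a {y} ≠ 0) :
    Tendsto (fun n => H (zs n, as n, y)) atTop (𝓝 (H (z, a, y))) := by
  rw [ProbabilityMeasure.tendsto_iff_forall_integral_tendsto]
  intro h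
  have hr := tendsto_rprimeM_real_singleton hPm hQm hP hQy hz ha
  have := isProbabilityMeasure_rprimeM hPm hQm z a
  have hr0 : (RprimeM P Q z a).real {y} ≠ 0 := (measureReal_ne_zero_iff).mpr hy
  have hN : Tendsto (fun n => (RprimeM P Q (zs n) (as n)).real {y} *
      ∫ x', h x' ∂(H (zs n, as n, y) : Measure X)) atTop
      (𝓝 ((RprimeM P Q z a).real {y} * ∫ x', h x' ∂(H (z, a, y) : Measure X))) := by
    simp only [rprimeM_real_singleton_mul_integral hPm hQm hH]
    exact tendsto_integral_integral hP
      (.ofMeasureReal Q {y} hQy * h.compContinuous ⟨Prod.snd, continuous_snd⟩) hz ha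
  have hquot := hN.div hr hr0
  rw [mul_div_cancel_left₀ _ hr0] at hquot
  refine hquot.congr' ?_
  filter_upwards [hr.eventually_ne hr0] with n hn
  exact mul_div_cancel_left₀ _ hn

end WeakContinuity

theorem qker_weakly_continuous_countable_part_general {X Y A : Type*}
    [MetricSpace X] [SecondCountableTopology X] [MeasurableSpace X] [BorelSpace X]
    [MetricSpace Y] [SecondCountableTopology Y] [MeasurableSpace Y] [BorelSpace Y]
    [MetricSpace A] [SecondCountableTopology A] [MeasurableSpace A] [BorelSpace A]
    (P : X × A → ProbabilityMeasure X) (Q : A × X → ProbabilityMeasure Y)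
    (hPmeas : Measurable fun p => (P p : Measure X))
    (hQmeas : Measurable fun p => (Q p : Measure Y))
    (Y₁ Y₂ : Set Y) (hY₁open : IsOpen Y₁)
    (hY₂count : Y₂.Countable)
    (hdisj : Disjoint Y₁ Y₂) (hpart : Y₁ ∪ Y₂ = Set.univ)
    -- (a) weak continuity of P and Q
    (hPcont : Continuous P) (hQcont : Continuous Q)
    -- (b) continuity of Q({y}|a,x) for y ∈ Y₂
    (hQy : ∀ y ∈ Y₂, Continuous fun p : A × X => ((Q p) {y} : ℝ))
    -- (c) the filtering kernel H, weakly continuous on P(X) × A × Y₁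
    (H : ProbabilityMeasure X × A × Y → ProbabilityMeasure X)
    (hHmeas : Measurable H)
    (hHdis : Disint P Q H)
    (hHcont : ContinuousOn H {t : ProbabilityMeasure X × A × Y | t.2.2 ∈ Y₁}) :
    ∀ (zs : ℕ → ProbabilityMeasure X) (z : ProbabilityMeasure X) (as : ℕ → A) (a : A),
      Tendsto zs atTop (𝓝 z) → Tendsto as atTop (𝓝 a) →
      ∀ f : BoundedContinuousFunction (ProbabilityMeasure X) ℝ,
        Tendsto (fun n => ∫ ζ, f ζ ∂(qker P Q H (zs n) (as n))) atTop
          (𝓝 (∫ ζ, f ζ ∂(qker P Q H z a))) := by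
  intro zs z as a hz ha f
  obtain rfl : Y₂ = Y₁ᶜ := (IsCompl.of_eq (hdisj.eq_bot) hpart).compl_eq.symm
  have hHy (ζ : ProbabilityMeasure X) (b : A) : Measurable fun y => H (ζ, b, y) := by fun_prop
  -- `q ζ b` is `qker P Q H ζ b`, bundled as a probability measure.
  let q (ζ : ProbabilityMeasure X) (b : A) : ProbabilityMeasure (ProbabilityMeasure X) :=
    (rprime hPmeas hQmeas ζ b).map (hHy ζ b).aemeasurable
  have hR := tendsto_rprime hPmeas hQmeas hPcont hQcont hz ha
  have hq : Tendsto (fun n => q (zs n) (as n)) atTop (𝓝 (q z a)) := by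
    refine tendsto_of_forall_isOpen_le_liminf' fun G hG =>
      map_le_liminf_map (fun U hU => ProbabilityMeasure.le_liminf_measure_open_of_tendsto hR hU)
        hY₁open hY₂count (hHy z a) (fun n => hHy _ _) (fun y hy => ?_) (fun y hy hy0 => ⟨?_, ?_⟩) hG
    · have hH_at : ContinuousAt H (z, a, y) := hHcont.continuousAt
        ((hY₁open.preimage (continuous_snd.comp continuous_snd)).mem_nhds hy)
      exact hH_at.tendsto.comp
        ((hz.comp tendsto_fst).prodMk_nhds ((ha.comp tendsto_fst).prodMk_nhds tendsto_snd))
    · exact tendsto_rprimeM_singleton hPmeas hQmeas hPcont (hQy y hy) hz ha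
    · exact tendsto_H_of_rprimeM_singleton_ne_zero hPmeas hQmeas hHdis hPcont (hQy y hy) hz ha hy0
  exact ProbabilityMeasure.tendsto_iff_forall_integral_tendsto.mp hq f

/-- **Corollary (countable nontransparent part).**
Let `Y = Y₁ ∪ Y₂` be a partition into disjoint Borel sets with `Y₁` open and `Y₂`
countable. If (a) `P` and `Q` are weakly continuous, (b) `(a,x) ↦ Q({y}|a,x)` is
continuous for every `y ∈ Y₂`, and (c) there is a stochastic kernel `H` satisfying (3.4)
whose restriction to `P(X)×A×Y₁` is weakly continuous, then the transition kernel `q` of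
the COMDP is weakly continuous. -/
theorem qker_weakly_continuous_countable_part {X Y A : Type*}
    [MetricSpace X] [SecondCountableTopology X] [MeasurableSpace X] [BorelSpace X]
    [MetricSpace Y] [SecondCountableTopology Y] [MeasurableSpace Y] [BorelSpace Y]
    [MetricSpace A] [SecondCountableTopology A] [MeasurableSpace A] [BorelSpace A]
    (P : X × A → ProbabilityMeasure X) (Q : A × X → ProbabilityMeasure Y)
    (hPmeas : Measurable fun p => (P p : Measure X))
    (hQmeas : Measurable fun p => (Q p : Measure Y))
    (Y₁ Y₂ : Set Y) (hY₁open : IsOpen Y₁) (hY₂meas : MeasurableSet Y₂)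
    (hY₂count : Y₂.Countable)
    (hdisj : Disjoint Y₁ Y₂) (hpart : Y₁ ∪ Y₂ = Set.univ)
    -- (a) weak continuity of P and Q
    (hPcont : Continuous P) (hQcont : Continuous Q)
    -- (b) continuity of Q({y}|a,x) for y ∈ Y₂
    (hQy : ∀ y ∈ Y₂, Continuous fun p : A × X => ((Q p) {y} : ℝ))
    -- (c) the filtering kernel H, weakly continuous on P(X) × A × Y₁
    (H : ProbabilityMeasure X × A × Y → ProbabilityMeasure X)
    (hHmeas : Measurable H)
    (hHdis : Disint P Q H)
    (hHcont : ContinuousOn H {t : ProbabilityMeasure X × A × Y | t.2.2 ∈ Y₁}) :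
    ∀ (zs : ℕ → ProbabilityMeasure X) (z : ProbabilityMeasure X) (as : ℕ → A) (a : A),
      Tendsto zs atTop (𝓝 z) → Tendsto as atTop (𝓝 a) →
      ∀ f : BoundedContinuousFunction (ProbabilityMeasure X) ℝ,
        Tendsto (fun n => ∫ ζ, f ζ ∂(qker P Q H (zs n) (as n))) atTop
          (𝓝 (∫ ζ, f ζ ∂(qker P Q H z a))) :=
  qker_weakly_continuous_countable_part_general P Q hPmeas hQmeas Y₁ Y₂ hY₁open hY₂count hdisj hpart
    hPcont hQcont hQy H hHmeas hHdis hHcont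
end

section
/- Let the stochastic kernel P(dx′|x,a) on X given X×A be weakly continuous, let Y be countable (with the discrete topology), and suppose for each y ∈ Y the function (a,x) ↦ Q({y}|a,x) is continuous on A×X. Then for each y ∈ Y the function (z,a) ↦ R′({y}|z,a) = ∫_X ∫_X Q({y}|a,x′) P(dx′|x,a) z(dx) is continuous on P(X)×A, where P(X) carries the topology of weak convergence. -/
/-!
For a bounded continuous `f` on `X × A`, the map `(μ, a) ↦ ∫ f (x, a) dμ` is weakly continuous:
`∫ f (x, a) dμ` is the integral of `f` against the push-forward of `μ` by `x ↦ (x, a)`, and these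
push-forwards depend continuously on `(μ, a)`, because against a bounded `L`-Lipschitz test
function moving `a` to `a'` changes the integral by at most `L · d(a, a')`.
Applied to `(x', a) ↦ Q({y}|a,x')` and composed with the weakly continuous `P`, this makes
`(x, a) ↦ ∫ Q({y}|a,x') P(dx'|x,a)` bounded and continuous; applied once more, it gives the
continuity of `R'`.
-/

open MeasureTheory Filter Topology
open scoped ENNReal NNReal

/-- The kernel `R'({y}|z,a) = ∫_X ∫_X Q({y}|a,x') P(dx'|x,a) z(dx)`. -/
noncomputable def RprimeAt {X Y A : Type*} [MeasurableSpace X] [MeasurableSpace Y]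
    (P : X × A → ProbabilityMeasure X) (Q : A × X → ProbabilityMeasure Y)
    (z : ProbabilityMeasure X) (a : A) (y : Y) : ℝ≥0∞ :=
  ∫⁻ x, (∫⁻ x', ((Q (a, x') : Measure Y) {y}) ∂((P (x, a) : Measure X))) ∂(z : Measure X)

open scoped BoundedContinuousFunction

section

variable {X A : Type*} [PseudoMetricSpace X] [SecondCountableTopology X] [MeasurableSpace X]
  [OpensMeasurableSpace X] [PseudoMetricSpace A] [MeasurableSpace A] [OpensMeasurableSpace A]

namespace MeasureTheory.ProbabilityMeasure

theorem integral_map_prodMk_right (ν : ProbabilityMeasure X) (b : A) {f : X × A → ℝ}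
    (hf : Continuous f) :
    ∫ p, f p ∂(ν.map (measurable_prodMk_right (y := b)).aemeasurable) = ∫ x, f (x, b) ∂ν := by
  rw [toMeasure_map, integral_map measurable_prodMk_right.aemeasurable hf.aestronglyMeasurable]

theorem tendsto_map_prodMk_right {γ : Type*} {l : Filter γ} [l.IsCountablyGenerated]
    {μs : γ → ProbabilityMeasure X} {as : γ → A} {μ : ProbabilityMeasure X} {a : A}
    (hμ : Tendsto μs l (𝓝 μ)) (ha : Tendsto as l (𝓝 a)) :
    Tendsto (fun i => (μs i).map (measurable_prodMk_right (y := as i)).aemeasurable) l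
      (𝓝 (μ.map (measurable_prodMk_right (y := a)).aemeasurable)) := by
  rw [tendsto_iff_forall_lipschitz_integral_tendsto]
  rintro f ⟨C, hC⟩ ⟨L, hL⟩
  simp only [integral_map_prodMk_right _ _ hL.continuous]
  have hslice : Tendsto (fun i => ∫ x, f (x, a) ∂(μs i)) l (𝓝 (∫ x, f (x, a) ∂μ)) :=
    tendsto_iff_forall_lipschitz_integral_tendsto.mp hμ _ ⟨C, fun _ _ => hC _ _⟩
      ⟨_, hL.comp (LipschitzWith.prodMk_right a)⟩
  have hint : ∀ (ν : ProbabilityMeasure X) (b : A), Integrable (fun x => f (x, b)) ν := fun ν b =>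
    ((BoundedContinuousFunction.mkOfBound ⟨f, hL.continuous⟩ C hC).compContinuous
      ⟨(·, b), by fun_prop⟩).integrable _
  have hdist : ∀ i,
      dist (∫ x, f (x, a) ∂(μs i)) (∫ x, f (x, as i) ∂(μs i)) ≤ L * dist (as i) a := by
    intro i
    rw [dist_eq_norm, ← integral_sub (hint _ _) (hint _ _)]
    refine (norm_integral_le_of_norm_le_const (C := L * dist (as i) a)
      (ae_of_all _ fun x => ?_)).trans (by simp)
    rw [← dist_eq_norm, dist_comm]
    simpa using (hL.comp (LipschitzWith.prodMk_left x)).dist_le_mul (as i) a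
  refine hslice.congr_dist (squeeze_zero (fun _ => dist_nonneg) hdist ?_)
  simpa using (tendsto_iff_dist_tendsto_zero.mp ha).const_mul (L : ℝ)

end MeasureTheory.ProbabilityMeasure

namespace BoundedContinuousFunction

open ProbabilityMeasure in
theorem continuous_integral_prodMk (f : X × A →ᵇ ℝ) :
    Continuous fun p : ProbabilityMeasure X × A => ∫ x, f (x, p.2) ∂p.1 := by
  refine continuous_iff_continuousAt.mpr fun p => ?_
  have h := tendsto_iff_forall_integral_tendsto.mp
    (tendsto_map_prodMk_right (continuous_fst.tendsto p) (continuous_snd.tendsto p)) f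
  simp only [integral_map_prodMk_right _ _ f.continuous] at h
  exact h

noncomputable def integralFst (f : X × A →ᵇ ℝ) : ProbabilityMeasure X × A →ᵇ ℝ :=
  .ofNormedAddCommGroup _ f.continuous_integral_prodMk ‖f‖ fun p => by
    simpa using norm_integral_le_of_norm_le_const (μ := (p.1 : Measure X))
      (ae_of_all _ fun x => f.norm_coe_le_norm (x, p.2))

theorem integralFst_nonneg {f : X × A →ᵇ ℝ} (hf : 0 ≤ f) (p : ProbabilityMeasure X × A) :
    0 ≤ f.integralFst p :=
  integral_nonneg fun _ => hf _

theorem lintegral_ofReal_eq_ofReal_integralFst {f : X × A →ᵇ ℝ} (hf : 0 ≤ f)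
    (μ : ProbabilityMeasure X) (a : A) :
    ∫⁻ x, ENNReal.ofReal (f (x, a)) ∂μ = ENNReal.ofReal (f.integralFst (μ, a)) :=
  (ofReal_integral_eq_lintegral_ofReal ((f.compContinuous ⟨(·, a), by fun_prop⟩).integrable _)
    (ae_of_all _ fun _ => hf _)).symm

end BoundedContinuousFunction

end

open BoundedContinuousFunction in
theorem RprimeAt_continuous_of_countable_general {X Y A : Type*}
    [MetricSpace X] [SecondCountableTopology X] [MeasurableSpace X] [BorelSpace X]
    [MetricSpace A] [MeasurableSpace A] [BorelSpace A]
    [MeasurableSpace Y]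
    (P : X × A → ProbabilityMeasure X) (Q : A × X → ProbabilityMeasure Y)
    (hPcont : Continuous P)
    (hQy : ∀ y : Y, Continuous fun p : A × X => ((Q p) {y} : ℝ)) :
    ∀ y : Y, Continuous fun p : ProbabilityMeasure X × A =>
      (RprimeAt P Q p.1 p.2 y).toReal := by
  intro y
  let q : X × A →ᵇ ℝ := (ofNormedAddCommGroup _ (hQy y) 1 fun p => by
    simp [(Q p).apply_le_one {y}]).compContinuous .prodSwap
  have hq : 0 ≤ q := fun _ => NNReal.coe_nonneg _
  let F : X × A →ᵇ ℝ := q.integralFst.compContinuous ⟨fun p => (P p, p.2), by fun_prop⟩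
  have hF : 0 ≤ F := fun _ => integralFst_nonneg hq _
  have hRprime : ∀ z a, RprimeAt P Q z a y = ENNReal.ofReal (F.integralFst (z, a)) := by
    intro z a
    have hinner : ∀ x,
        ∫⁻ x', (Q (a, x') : Measure Y) {y} ∂(P (x, a)) = ENNReal.ofReal (F (x, a)) := fun x => by
      change _ = ENNReal.ofReal (q.integralFst (P (x, a), a))
      rw [← lintegral_ofReal_eq_ofReal_integralFst hq]
      simp [q, ProbabilityMeasure.ennreal_coeFn_eq_coeFn_toMeasure]
    simp only [RprimeAt, hinner, lintegral_ofReal_eq_ofReal_integralFst hF]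
  refine F.integralFst.continuous.congr fun ⟨z, a⟩ => ?_
  rw [hRprime]
  exact (ENNReal.toReal_ofReal (integralFst_nonneg hF _)).symm

/-- **Lemma (continuity of `R'({y}|z,a)` for countable observation sets).**
If the kernel `P` on `X` given `X×A` is weakly continuous, `Y` is countable (discrete),
and `(a,x) ↦ Q({y}|a,x)` is continuous for each `y ∈ Y`, then for each `y ∈ Y` the
function `(z,a) ↦ R'({y}|z,a)` is continuous on `P(X)×A`, where `P(X)` carries the
topology of weak convergence. -/
theorem RprimeAt_continuous_of_countable {X Y A : Type*}
    [MetricSpace X] [SecondCountableTopology X] [MeasurableSpace X] [BorelSpace X]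
    [MetricSpace A] [MeasurableSpace A] [BorelSpace A]
    [Countable Y] [TopologicalSpace Y] [DiscreteTopology Y]
    [MeasurableSpace Y] [MeasurableSingletonClass Y]
    (P : X × A → ProbabilityMeasure X) (Q : A × X → ProbabilityMeasure Y)
    (hPmeas : Measurable fun p => (P p : Measure X))
    (hPcont : Continuous P)
    (hQy : ∀ y : Y, Continuous fun p : A × X => ((Q p) {y} : ℝ)) :
    ∀ y : Y, Continuous fun p : ProbabilityMeasure X × A =>
      (RprimeAt P Q p.1 p.2 y).toReal :=
  RprimeAt_continuous_of_countable_general P Q hPcont hQy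
end

section
/- Let Y and W be Borel subsets of Polish spaces, let X = Y×W, let A be a Borel subset of a Polish space, and let P(dx′|x,a) be a stochastic kernel on X given X×A. Suppose that for each nonempty open set O in W, the family of functions { (x,a) ↦ P(C×O|x,a) : C Borel in Y } is equicontinuous at every point (x,a) ∈ X×A. Then the stochastic kernel R′ on Y given P(X)×A defined by R′(C|z,a) = ∫_X P(C×W|x,a) z(dx) is continuous in total variation: whenever z⁽ⁿ⁾ → z weakly in P(X) and a⁽ⁿ⁾ → a in A, sup_{C Borel in Y} |R′(C|z⁽ⁿ⁾,a⁽ⁿ⁾) − R′(C|z,a)| → 0. -/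
/-!
Only the sets `C ×ˢ univ` enter `R'`, so the hypothesis for `O = W` says that the functions
`g_C (x, a) = P(C × W | x, a)` form a uniformly bounded equicontinuous family. Near each point
`x` they are therefore `δ`-close to the constants `g_C (x, a)`, uniformly in `C` and in actions
near `a`. Choosing these neighbourhoods as balls with `z`-null boundary and disjointifying a
countable subcover gives finitely many pieces `E_k` carrying all but `δ` of the mass of `z`.
Comparing both integrals with the step function `∑ g_C (x_k, a) 1_{E_k}` bounds their difference
by `O(δ) + ∑ |zₙ(E_k) - z(E_k)|`, and the last sum tends to zero by the portmanteau theorem.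
-/

open MeasureTheory Filter Topology Function Metric Set
open scoped ENNReal

theorem TendstoUniformly.tendsto_iSup_abs_sub {ι α : Type*} {F : ι → α → ℝ}
    {f : α → ℝ} {l : Filter ι} (h : TendstoUniformly F f l) :
    Tendsto (fun n => ⨆ a, |F n a - f a|) l (𝓝 0) := by
  rw [Metric.tendsto_nhds]
  intro ε hε
  filter_upwards [Metric.tendstoUniformly_iff.1 h (ε / 2) (half_pos hε)] with n hn
  have hsup : ⨆ a, |F n a - f a| ≤ ε / 2 :=
    Real.iSup_le (fun a => by rw [abs_sub_comm]; exact (hn a).le) (half_pos hε).le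
  rw [Real.dist_eq, sub_zero, abs_of_nonneg (Real.iSup_nonneg fun a => abs_nonneg _)]
  linarith

theorem equicontinuousAt_of_tendsto_iSup_abs_sub {X I : Type*} [TopologicalSpace X]
    {g : I → X → ℝ} {x₀ : X} {M : ℝ} (hM : ∀ i x, |g i x| ≤ M)
    (h : Tendsto (fun x => ⨆ i, |g i x - g i x₀|) (𝓝 x₀) (𝓝 0)) : EquicontinuousAt g x₀ := by
  rw [Metric.equicontinuousAt_iff_right]
  intro ε hε
  filter_upwards [h.eventually (eventually_lt_nhds hε)] with x hx i
  have hbdd : BddAbove (range fun i => |g i x - g i x₀|) :=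
    ⟨M + M, forall_mem_range.2 fun j =>
      (abs_sub _ _).trans (add_le_add (hM j x) (hM j x₀))⟩
  rw [dist_comm, Real.dist_eq]
  exact (le_ciSup hbdd i).trans_lt hx

theorem null_frontier_disjointed {X ι : Type*} [TopologicalSpace X] [MeasurableSpace X]
    [Preorder ι] [LocallyFiniteOrderBot ι] {μ : Measure X} {B : ι → Set X}
    (hB : ∀ k, μ (frontier (B k)) = 0) (k : ι) :
    μ (frontier (disjointed B k)) = 0 :=
  disjointedRec (p := fun t => μ (frontier t) = 0) (fun _ i ht => by
    rw [sdiff_eq]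
    exact null_frontier_inter ht (by rw [frontier_compl]; exact hB i)) (hB k)

theorem exists_measure_compl_biUnion_range_lt {X : Type*} [MeasurableSpace X] (μ : Measure X)
    [IsFiniteMeasure μ] {E : ℕ → Set X} (hE : ∀ k, MeasurableSet (E k))
    (hcover : ⋃ k, E k = univ) {ε : ℝ≥0∞} (hε : 0 < ε) :
    ∃ K, μ (⋃ k ∈ Finset.range K, E k)ᶜ < ε := by
  have hanti : Antitone fun K => (⋃ k ∈ Finset.range K, E k)ᶜ := fun m n hmn =>
    compl_subset_compl.2 (biUnion_subset_biUnion_left (by simpa using hmn))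
  have hempty : ⋂ K, (⋃ k ∈ Finset.range K, E k)ᶜ = ∅ := by
    rw [← compl_iUnion, compl_empty_iff, eq_univ_iff_forall]
    intro x
    obtain ⟨k, hk⟩ := mem_iUnion.1 (hcover ▸ mem_univ x)
    exact mem_iUnion₂.2 ⟨k + 1, ⟨k, by simpa using hk⟩⟩
  have hlim := tendsto_measure_iInter_atTop (μ := μ)
    (fun K => (Finset.measurableSet_biUnion _ fun k _ => hE k).compl.nullMeasurableSet) hanti
    ⟨0, measure_ne_top μ _⟩
  rw [hempty, measure_empty] at hlim
  exact (hlim.eventually (eventually_lt_nhds hε)).exists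

section NullFrontierCover

variable {X : Type*} [PseudoMetricSpace X] [MeasurableSpace X] [OpensMeasurableSpace X]

theorem exists_ball_subset_null_frontier (μ : Measure X) [SFinite μ] {x : X} {N : Set X}
    (hN : N ∈ 𝓝 x) : ∃ r > 0, ball x r ⊆ N ∧ μ (frontier (ball x r)) = 0 := by
  obtain ⟨R, hR, hRN⟩ := Metric.mem_nhds_iff.1 hN
  obtain ⟨r, hr, hnull⟩ := exists_null_frontier_thickening μ {x} hR
  rw [thickening_singleton] at hnull
  exact ⟨r, hr.1, (ball_subset_ball hr.2.le).trans hRN, hnull⟩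

theorem exists_disjoint_null_frontier_cover [SecondCountableTopology X] [Nonempty X]
    (μ : Measure X) [IsFiniteMeasure μ] {N : X → Set X} (hN : ∀ x, N x ∈ 𝓝 x) {ε : ℝ≥0∞}
    (hε : 0 < ε) :
    ∃ (c : ℕ → X) (E : ℕ → Set X), (∀ k, MeasurableSet (E k)) ∧ Pairwise (Disjoint on E) ∧
      (∀ k, μ (frontier (E k)) = 0) ∧ (∀ k, E k ⊆ N (c k)) ∧
      ∃ K, μ (⋃ k ∈ Finset.range K, E k)ᶜ < ε := by
  choose r hr hrN hnull using fun x => exists_ball_subset_null_frontier μ (hN x)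
  obtain ⟨T, hTc, hT⟩ :=
    TopologicalSpace.isOpen_iUnion_countable (fun x => ball x (r x)) fun x => isOpen_ball
  have hTcover : ⋃ x ∈ T, ball x (r x) = univ :=
    hT.trans (iUnion_eq_univ_iff.2 fun x => ⟨x, mem_ball_self (hr x)⟩)
  have hTne : T.Nonempty := by
    obtain ⟨x⟩ := ‹Nonempty X›
    obtain ⟨y, hy, -⟩ := mem_iUnion₂.1 (hTcover ▸ mem_univ x)
    exact ⟨y, hy⟩
  obtain ⟨c, rfl⟩ := hTc.exists_eq_range hTne
  set B : ℕ → Set X := fun k => ball (c k) (r (c k))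
  have hBm : ∀ k, MeasurableSet (B k) := fun k => measurableSet_ball
  refine ⟨c, disjointed B, MeasurableSet.disjointed hBm, disjoint_disjointed B,
    null_frontier_disjointed fun k => hnull (c k),
    fun k => (disjointed_subset B k).trans (hrN (c k)), ?_⟩
  refine exists_measure_compl_biUnion_range_lt μ (MeasurableSet.disjointed hBm) ?_ hε
  rw [iUnion_disjointed, ← hTcover, biUnion_range]

end NullFrontierCover

theorem tendsto_sum_abs_measureReal_sub_of_null_frontier {X ι β : Type*} [TopologicalSpace X]
    [MeasurableSpace X] [OpensMeasurableSpace X] [HasOuterApproxClosed X] {L : Filter β}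
    {μs : β → ProbabilityMeasure X} {μ : ProbabilityMeasure X} (hμ : Tendsto μs L (𝓝 μ))
    (s : Finset ι) {E : ι → Set X} (hE : ∀ k ∈ s, (μ : Measure X) (frontier (E k)) = 0) :
    Tendsto (fun n => ∑ k ∈ s, |(μs n : Measure X).real (E k) - (μ : Measure X).real (E k)|) L
      (𝓝 0) := by
  rw [← Finset.sum_const_zero (s := s)]
  refine tendsto_finsetSum _ fun k hk => ?_
  have hlim : Tendsto (fun n => (μs n : Measure X).real (E k)) L
      (𝓝 ((μ : Measure X).real (E k))) := (ENNReal.tendsto_toReal (measure_ne_top _ _)).comp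
    (ProbabilityMeasure.tendsto_measure_of_null_frontier_of_tendsto' hμ (hE k hk))
  simpa only [sub_self, abs_zero] using (hlim.sub_const ((μ : Measure X).real (E k))).abs

section StepApproximation

variable {X ι : Type*} [MeasurableSpace X] {μ ν : Measure X} {s : Finset ι} {E : ι → Set X}
  {f g : X → ℝ} {c : ι → ℝ} {ε : ℝ}

theorem abs_integral_sub_sum_mul_measureReal_le [IsFiniteMeasure μ]
    (hE : ∀ k ∈ s, MeasurableSet (E k)) (hdisj : (s : Set ι).PairwiseDisjoint E)
    (hf : Integrable f μ) (hf1 : ∀ x, |f x| ≤ 1)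
    (hfc : ∀ k ∈ s, ∀ x ∈ E k, |f x - c k| ≤ ε) :
    |∫ x, f x ∂μ - ∑ k ∈ s, c k * μ.real (E k)| ≤
      ε * μ.real (⋃ k ∈ s, E k) + μ.real (⋃ k ∈ s, E k)ᶜ := by
  set U := ⋃ k ∈ s, E k
  have hpieces : ∫ x in U, f x ∂μ - ∑ k ∈ s, c k * μ.real (E k) =
      ∑ k ∈ s, ∫ x in E k, (f x - c k) ∂μ := by
    rw [integral_biUnion_finset s hE hdisj fun k _ => hf.integrableOn,
      ← Finset.sum_sub_distrib]
    refine Finset.sum_congr rfl fun k _ => ?_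
    rw [integral_sub hf.integrableOn (integrableOn_const (measure_ne_top μ _)),
      setIntegral_const, smul_eq_mul, mul_comm]
  have hsum : |∑ k ∈ s, ∫ x in E k, (f x - c k) ∂μ| ≤ ε * μ.real U := by
    rw [measureReal_biUnion_finset hdisj hE, Finset.mul_sum]
    refine (Finset.abs_sum_le_sum_abs _ _).trans (Finset.sum_le_sum fun k hk => ?_)
    exact norm_setIntegral_le_of_norm_le_const (measure_lt_top _ _) fun x hx =>
      (Real.norm_eq_abs _).trans_le (hfc k hk x hx)
  have htail : |∫ x in Uᶜ, f x ∂μ| ≤ μ.real Uᶜ := by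
    simpa using norm_setIntegral_le_of_norm_le_const (measure_lt_top μ Uᶜ) fun x _ =>
      (Real.norm_eq_abs _).trans_le (hf1 x)
  have hUm : MeasurableSet U := Finset.measurableSet_biUnion s hE
  rw [← integral_add_compl hUm hf, add_sub_right_comm]
  exact (abs_add_le _ _).trans (add_le_add (hpieces ▸ hsum) htail)

theorem abs_integral_sub_integral_le_of_near_step [IsProbabilityMeasure μ]
    [IsProbabilityMeasure ν] (hE : ∀ k ∈ s, MeasurableSet (E k))
    (hdisj : (s : Set ι).PairwiseDisjoint E) (hc1 : ∀ k, |c k| ≤ 1) (hε : 0 ≤ ε)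
    (hf : Integrable f μ) (hf1 : ∀ x, |f x| ≤ 1)
    (hfc : ∀ k ∈ s, ∀ x ∈ E k, |f x - c k| ≤ ε)
    (hg : Integrable g ν) (hg1 : ∀ x, |g x| ≤ 1)
    (hgc : ∀ k ∈ s, ∀ x ∈ E k, |g x - c k| ≤ ε) :
    |∫ x, f x ∂μ - ∫ x, g x ∂ν| ≤
      2 * ε + 2 * ∑ k ∈ s, |μ.real (E k) - ν.real (E k)| + 2 * ν.real (⋃ k ∈ s, E k)ᶜ := by
  set U := ⋃ k ∈ s, E k
  set D := ∑ k ∈ s, |μ.real (E k) - ν.real (E k)|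
  have hUm : MeasurableSet U := Finset.measurableSet_biUnion s hE
  have hsteps : |∑ k ∈ s, c k * μ.real (E k) - ∑ k ∈ s, c k * ν.real (E k)| ≤ D := by
    rw [← Finset.sum_sub_distrib]
    refine (Finset.abs_sum_le_sum_abs _ _).trans (Finset.sum_le_sum fun k _ => ?_)
    rw [← mul_sub, abs_mul]
    exact mul_le_of_le_one_left (abs_nonneg _) (hc1 k)
  have htails : μ.real Uᶜ ≤ ν.real Uᶜ + D := by
    rw [probReal_compl_eq_one_sub hUm, probReal_compl_eq_one_sub hUm,
      measureReal_biUnion_finset hdisj hE, measureReal_biUnion_finset hdisj hE]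
    have hD : |∑ k ∈ s, μ.real (E k) - ∑ k ∈ s, ν.real (E k)| ≤ D := by
      rw [← Finset.sum_sub_distrib]
      exact Finset.abs_sum_le_sum_abs _ _
    linarith [neg_abs_le (∑ k ∈ s, μ.real (E k) - ∑ k ∈ s, ν.real (E k))]
  have hμ := abs_integral_sub_sum_mul_measureReal_le hE hdisj hf hf1 hfc
  have hν := abs_integral_sub_sum_mul_measureReal_le hE hdisj hg hg1 hgc
  have hμU : ε * μ.real U ≤ ε := mul_le_of_le_one_right hε measureReal_le_one
  have hνU : ε * ν.real U ≤ ε := mul_le_of_le_one_right hε measureReal_le_one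
  rw [abs_sub_comm] at hν
  linarith [abs_sub_le (∫ x, f x ∂μ) (∑ k ∈ s, c k * μ.real (E k)) (∫ x, g x ∂ν),
    abs_sub_le (∑ k ∈ s, c k * μ.real (E k)) (∑ k ∈ s, c k * ν.real (E k)) (∫ x, g x ∂ν)]

end StepApproximation

theorem tendstoUniformly_integral_of_equicontinuous {X A I : Type*} [PseudoMetricSpace X]
    [SecondCountableTopology X] [MeasurableSpace X] [OpensMeasurableSpace X]
    [TopologicalSpace A] {g : I → X × A → ℝ} (hg : Equicontinuous g) (hg1 : ∀ i p, |g i p| ≤ 1)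
    {zs : ℕ → ProbabilityMeasure X} {z : ProbabilityMeasure X} (hz : Tendsto zs atTop (𝓝 z))
    {as : ℕ → A} {a : A} (ha : Tendsto as atTop (𝓝 a)) :
    TendstoUniformly (fun n i => ∫ x, g i (x, as n) ∂(zs n : Measure X))
      (fun i => ∫ x, g i (x, a) ∂(z : Measure X)) atTop := by
  have : Nonempty X := z.nonempty
  have hint : ∀ i b (μ : Measure X) [IsFiniteMeasure μ], Integrable (fun x => g i (x, b)) μ :=
    fun i b μ _ => .of_bound ((hg.continuous i).comp (.prodMk_left b)).aestronglyMeasurable 1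
      (ae_of_all _ fun x => (Real.norm_eq_abs _).trans_le (hg1 i _))
  rw [Metric.tendstoUniformly_iff]
  intro ε hε
  obtain ⟨δ, hδ, hδε⟩ : ∃ δ, 0 < δ ∧ 6 * δ < ε := ⟨ε / 7, by positivity, by linarith⟩
  have hnear : ∀ x, ∃ V ∈ 𝓝 a, ∃ N ∈ 𝓝 x,
      ∀ y ∈ N, ∀ b ∈ V, ∀ i, |g i (y, b) - g i (x, a)| ≤ δ := by
    intro x
    obtain ⟨N, hN, V, hV, hNV⟩ := mem_nhds_prod_iff.1
      ((Metric.equicontinuousAt_iff_right.1 (hg (x, a))) δ hδ)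
    exact ⟨V, hV, N, hN, fun y hy b hb i => by
      rw [abs_sub_comm, ← Real.dist_eq]; exact (hNV (mk_mem_prod hy hb) i).le⟩
  choose V hV N hN hgN using hnear
  obtain ⟨c, E, hEm, hEdisj, hEfr, hEN, K, hK⟩ :=
    exists_disjoint_null_frontier_cover (z : Measure X) hN (ENNReal.ofReal_pos.2 hδ)
  have hconv := tendsto_sum_abs_measureReal_sub_of_null_frontier hz (Finset.range K)
    fun k _ => hEfr k
  have hactions : ∀ᶠ n in atTop, ∀ k ∈ Finset.range K, as n ∈ V (c k) :=
    (eventually_all_finset _).2 fun k _ => ha (hV (c k))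
  filter_upwards [hconv.eventually (eventually_lt_nhds hδ), hactions] with n hsum han i
  rw [dist_comm, Real.dist_eq]
  have hbound := abs_integral_sub_integral_le_of_near_step (μ := (zs n : Measure X))
    (ν := (z : Measure X)) (c := fun k => g i (c k, a)) (fun k _ => hEm k)
    (hEdisj.set_pairwise _) (fun k => hg1 i _) hδ.le (hint i (as n) _) (fun x => hg1 i _)
    (fun k hk x hx => hgN (c k) x (hEN k hx) (as n) (han k hk) i) (hint i a _)
    (fun x => hg1 i _) (fun k _ x hx => hgN (c k) x (hEN k hx) a (mem_of_mem_nhds (hV (c k))) i)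
  have htail := ENNReal.toReal_lt_of_lt_ofReal hK
  rw [← measureReal_def] at htail
  linarith

theorem mdmii_Rprime_totalVariation_continuous_general {Y W A : Type*}
    [MetricSpace Y] [SecondCountableTopology Y] [MeasurableSpace Y] [BorelSpace Y]
    [MetricSpace W] [SecondCountableTopology W] [MeasurableSpace W] [BorelSpace W]
    [MetricSpace A]
    (P : (Y × W) × A → ProbabilityMeasure (Y × W))
    (hequi : ∀ O : Set W, IsOpen O → O.Nonempty →
      ∀ p₀ : (Y × W) × A,
        Tendsto (fun p : (Y × W) × A =>
            ⨆ C : {C : Set Y // MeasurableSet C},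
              |((P p : Measure (Y × W)) (C.1 ×ˢ O)).toReal -
                ((P p₀ : Measure (Y × W)) (C.1 ×ˢ O)).toReal|)
          (𝓝 p₀) (𝓝 0)) :
    ∀ (zs : ℕ → ProbabilityMeasure (Y × W)) (z : ProbabilityMeasure (Y × W))
      (as : ℕ → A) (a : A),
      Tendsto zs atTop (𝓝 z) → Tendsto as atTop (𝓝 a) →
      Tendsto (fun n => ⨆ C : {C : Set Y // MeasurableSet C},
          |(∫⁻ x, (P (x, as n) : Measure (Y × W)) (C.1 ×ˢ (Set.univ : Set W))
              ∂(zs n : Measure (Y × W))).toReal -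
            (∫⁻ x, (P (x, a) : Measure (Y × W)) (C.1 ×ˢ (Set.univ : Set W))
              ∂(z : Measure (Y × W))).toReal|)
        atTop (𝓝 0) := by
  intro zs z as a hz ha
  have : Nonempty W := ⟨z.nonempty.some.2⟩
  let g (C : {C : Set Y // MeasurableSet C}) (p : (Y × W) × A) : ℝ :=
    (P p : Measure (Y × W)).real (C.1 ×ˢ univ)
  have hg1 : ∀ C p, |g C p| ≤ 1 := fun C p => by
    rw [abs_of_nonneg measureReal_nonneg]
    exact measureReal_le_one
  have hg : Equicontinuous g := fun p₀ =>
    equicontinuousAt_of_tendsto_iSup_abs_sub hg1 (hequi univ isOpen_univ univ_nonempty p₀)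
  have hRprime : ∀ (μ : Measure (Y × W)) (b : A) C,
      (∫⁻ x, (P (x, b) : Measure (Y × W)) (C.1 ×ˢ univ) ∂μ).toReal = ∫ x, g C (x, b) ∂μ := by
    intro μ b C
    have hmeas : Measurable fun x => g C (x, b) :=
      ((hg.continuous C).comp (.prodMk_left b)).measurable
    rw [← integral_toReal _ (ae_of_all _ fun x => measure_lt_top _ _)]
    · rfl
    · have hofReal : (fun x => (P (x, b) : Measure (Y × W)) (C.1 ×ˢ univ)) =
          fun x => ENNReal.ofReal (g C (x, b)) :=
        funext fun x => (ofReal_measureReal (measure_ne_top _ _)).symm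
      exact hofReal ▸ hmeas.ennreal_ofReal.aemeasurable
  simpa only [hRprime] using
    (tendstoUniformly_integral_of_equicontinuous hg hg1 hz ha).tendsto_iSup_abs_sub

/-- **Theorem (total variation continuity of `R'` for MDMIIs).**
Let `X = Y × W` with `Y` the observable and `W` the unobservable component, and let
`P(dx'|x,a)` be a stochastic kernel on `X` given `X×A`. If for each nonempty open
`O ⊆ W` the family `{(x,a) ↦ P(C×O|x,a) : C Borel in Y}` is equicontinuous at every
point `(x,a) ∈ X×A`, then the kernel `R'(C|z,a) = ∫_X P(C×W|x,a) z(dx)` on `Y` given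
`P(X)×A` is continuous in total variation: whenever `z⁽ⁿ⁾ → z` weakly and `a⁽ⁿ⁾ → a`,
`sup_{C Borel in Y} |R'(C|z⁽ⁿ⁾,a⁽ⁿ⁾) − R'(C|z,a)| → 0`. -/
theorem mdmii_Rprime_totalVariation_continuous {Y W A : Type*}
    [MetricSpace Y] [SecondCountableTopology Y] [MeasurableSpace Y] [BorelSpace Y]
    [MetricSpace W] [SecondCountableTopology W] [MeasurableSpace W] [BorelSpace W]
    [MetricSpace A] [SecondCountableTopology A] [MeasurableSpace A] [BorelSpace A]
    (P : (Y × W) × A → ProbabilityMeasure (Y × W))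
    (hPmeas : Measurable fun p => (P p : Measure (Y × W)))
    (hequi : ∀ O : Set W, IsOpen O → O.Nonempty →
      ∀ p₀ : (Y × W) × A,
        Tendsto (fun p : (Y × W) × A =>
            ⨆ C : {C : Set Y // MeasurableSet C},
              |((P p : Measure (Y × W)) (C.1 ×ˢ O)).toReal -
                ((P p₀ : Measure (Y × W)) (C.1 ×ˢ O)).toReal|)
          (𝓝 p₀) (𝓝 0)) :
    ∀ (zs : ℕ → ProbabilityMeasure (Y × W)) (z : ProbabilityMeasure (Y × W))
      (as : ℕ → A) (a : A),
      Tendsto zs atTop (𝓝 z) → Tendsto as atTop (𝓝 a) →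
      Tendsto (fun n => ⨆ C : {C : Set Y // MeasurableSet C},
          |(∫⁻ x, (P (x, as n) : Measure (Y × W)) (C.1 ×ˢ (Set.univ : Set W))
              ∂(zs n : Measure (Y × W))).toReal -
            (∫⁻ x, (P (x, a) : Measure (Y × W)) (C.1 ×ˢ (Set.univ : Set W))
              ∂(z : Measure (Y × W))).toReal|)
        atTop (𝓝 0) :=
  mdmii_Rprime_totalVariation_continuous_general P hequi
end
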